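/- Assume the pair (A,A') is good. Then the bilinear form induced by ⟨·,·⟩ on [A,A'] is nondegenerate (so [A,A'] is a symplectic vector space of dimension 2n − 2t). -/

import Mathlib

open Module Submodule

variable {k V : Type*} [Field k] [AddCommGroup V] [Module k V]

/-- The orthogonal `A^⊥ = {x ∈ V : ⟨x,a⟩ = 0 ∀ a ∈ A}` of a subspace `A` of `V` with
respect to a bilinear form `B` on `V`. -/
def perp (B : V →ₗ[k] V →ₗ[k] k) (A : Submodule k V) : Submodule k V where
  carrier := {x | ∀ a ∈ A, B x a = 0}
  add_mem' := fun {x y} hx hy a ha => by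
    simp [map_add, LinearMap.add_apply, hx a ha, hy a ha]
  zero_mem' := fun a ha => by simp
  smul_mem' := fun c x hx a ha => by
    simp [map_smul, LinearMap.smul_apply, hx a ha]

/-- The pair `(A,A')` of isotropic subspaces is *good* if there is a subspace `L` with
`A^⊥ = L ⊕ A` and `A'^⊥ = L ⊕ A'` (internal direct sums). -/
def IsGood (B : V →ₗ[k] V →ₗ[k] k) (A A' : Submodule k V) : Prop :=
  ∃ L : Submodule k V,
    (Disjoint L A ∧ L ⊔ A = perp B A) ∧ (Disjoint L A' ∧ L ⊔ A' = perp B A')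

/-!
Write `W = A^⊥ ∩ A'^⊥ = (A + A')^⊥`. Counting dimensions, `dim L = 2n - 2t` and
`dim W = 2n - 2t + dim (A ∩ A')`, so `W = L ⊕ (A ∩ A')`. By the modular law this gives
`A ∩ A'^⊥ = A ∩ W = A ∩ A'`, and symmetrically `A' ∩ A^⊥ = A ∩ A'`. The radical of the form
on `W` is `W ∩ W^⊥ = W ∩ (A + A')`; splitting `x = a + a'` there, `a ∈ A ∩ A'^⊥` and
`a' ∈ A' ∩ A^⊥`, so `x ∈ A ∩ A'`. Finally `dim [A,A'] = dim W - dim (A ∩ A') = dim L`.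
-/

theorem Submodule.finrank_sup_of_disjoint {U U' : Submodule k V} [FiniteDimensional k U]
    [FiniteDimensional k U'] (h : Disjoint U U') :
    finrank k ↥(U ⊔ U') = finrank k U + finrank k U' := by
  rw [← finrank_sup_add_finrank_inf_eq, h.eq_bot, finrank_bot, add_zero]

theorem Submodule.finrank_quotient_comap_subtype_of_le [FiniteDimensional k V]
    {U W : Submodule k V} (h : U ≤ W) :
    finrank k (W ⧸ U.comap W.subtype) = finrank k W - finrank k U := by
  rw [← (comapSubtypeEquivOfLe h).finrank_eq,
    ← finrank_quotient_add_finrank (U.comap W.subtype), Nat.add_sub_cancel]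

section Perp

variable (B : V →ₗ[k] V →ₗ[k] k)

theorem perp_inf_perp (A A' : Submodule k V) : perp B A ⊓ perp B A' = perp B (A ⊔ A') := by
  ext x
  refine ⟨fun ⟨hxA, hxA'⟩ y hy => ?_, fun hx => ⟨fun a ha => hx a (mem_sup_left ha),
    fun a ha => hx a (mem_sup_right ha)⟩⟩
  obtain ⟨a, ha, a', ha', rfl⟩ := mem_sup.mp hy
  rw [map_add, hxA a ha, hxA' a' ha', add_zero]

variable {B}

theorem perp_eq_orthogonal (hB : B.IsRefl) (U : Submodule k V) :
    perp B U = LinearMap.BilinForm.orthogonal B U := by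
  ext x
  exact ⟨fun h a ha => hB _ _ (h a ha), fun h a ha => hB _ _ (h a ha)⟩

variable [FiniteDimensional k V]

theorem finrank_perp (hB : B.IsRefl) (hB' : B.Nondegenerate) (U : Submodule k V) :
    finrank k (perp B U) = finrank k V - finrank k U := by
  rw [perp_eq_orthogonal hB, LinearMap.BilinForm.finrank_orthogonal hB']

theorem perp_perp (hB : B.IsRefl) (hB' : B.Nondegenerate) (U : Submodule k V) :
    perp B (perp B U) = U := by
  rw [perp_eq_orthogonal hB, perp_eq_orthogonal hB,
    LinearMap.BilinForm.orthogonal_orthogonal hB' hB]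

end Perp

section GoodPair

variable {B : V →ₗ[k] V →ₗ[k] k} {L A A' : Submodule k V}

theorem sup_inf_eq_perp_inf_perp [FiniteDimensional k V] (hB : B.IsRefl) (hB' : B.Nondegenerate)
    (hA : A ≤ perp B A) (hA' : A' ≤ perp B A')
    (hLA : Disjoint L A) (hLA_sup : L ⊔ A = perp B A)
    (hLA' : Disjoint L A') (hLA'_sup : L ⊔ A' = perp B A') :
    L ⊔ (A ⊓ A') = perp B A ⊓ perp B A' := by
  have hle : L ⊔ (A ⊓ A') ≤ perp B A ⊓ perp B A' :=
    sup_le (le_inf (le_sup_left.trans hLA_sup.le) (le_sup_left.trans hLA'_sup.le))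
      (le_inf (inf_le_left.trans hA) (inf_le_right.trans hA'))
  refine eq_of_le_of_finrank_le hle ?_
  have hLA_dim := finrank_sup_of_disjoint hLA
  have hLA'_dim := finrank_sup_of_disjoint hLA'
  rw [hLA_sup, finrank_perp hB hB'] at hLA_dim
  rw [hLA'_sup, finrank_perp hB hB'] at hLA'_dim
  have hsup_inf := finrank_sup_add_finrank_inf_eq A A'
  have hsup_le := finrank_le (A ⊔ A')
  rw [perp_inf_perp, finrank_perp hB hB',
    finrank_sup_of_disjoint (hLA.mono_right inf_le_left)]
  omega

theorem inf_perp_le_of_sup_inf_eq (hA : A ≤ perp B A) (hLA : Disjoint L A)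
    (hW : L ⊔ (A ⊓ A') = perp B A ⊓ perp B A') :
    A ⊓ perp B A' ≤ A' := by
  calc A ⊓ perp B A' = (A ⊓ A' ⊔ L) ⊓ A := by
        rw [sup_comm, hW, inf_right_comm, inf_eq_right.mpr hA]
    _ = A ⊓ A' := by rw [sup_inf_assoc_of_le L inf_le_left, hLA.eq_bot, sup_bot_eq]
    _ ≤ A' := inf_le_right

theorem sup_inf_perp_inf_perp_le (hA : A ≤ perp B A) (hA' : A' ≤ perp B A')
    (hAA' : A ⊓ perp B A' ≤ A') (hA'A : A' ⊓ perp B A ≤ A) :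
    (A ⊔ A') ⊓ (perp B A ⊓ perp B A') ≤ A ⊓ A' := by
  rintro x ⟨hx, hxA, hxA'⟩
  obtain ⟨a, ha, a', ha', rfl⟩ := mem_sup.mp hx
  have ha_perp : a ∈ perp B A' := by
    simpa using sub_mem hxA' (hA' ha')
  have ha'_perp : a' ∈ perp B A := by
    simpa using sub_mem hxA (hA ha)
  exact add_mem ⟨ha, hAA' ⟨ha, ha_perp⟩⟩ ⟨hA'A ⟨ha', ha'_perp⟩, ha'⟩

end GoodPair

theorem stmt6_general [FiniteDimensional k V] (n t : ℕ)
    (B : V →ₗ[k] V →ₗ[k] k)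
    (hdim : finrank k V = 2 * n)
    (halt : ∀ x : V, B x x = 0)
    (hnd : ∀ x : V, (∀ y : V, B x y = 0) → x = 0)
    (A A' : Submodule k V)
    (hA : A ≤ perp B A) (hA' : A' ≤ perp B A')
    (hdA : finrank k A = t)
    (hgood : IsGood B A A') :
    (∀ x ∈ perp B A ⊓ perp B A',
      (∀ y ∈ perp B A ⊓ perp B A', B x y = 0) → x ∈ A ⊓ A') ∧
    finrank k (↥(perp B A ⊓ perp B A') ⧸ (A ⊓ A').comap (perp B A ⊓ perp B A').subtype)
      = 2 * n - 2 * t := by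
  obtain ⟨L, ⟨hLA, hLA_sup⟩, hLA', hLA'_sup⟩ := hgood
  have hB : B.IsRefl := LinearMap.IsAlt.isRefl halt
  have hB' : B.Nondegenerate := hB.nondegenerate_iff_separatingLeft.mpr hnd
  have hW := sup_inf_eq_perp_inf_perp hB hB' hA hA' hLA hLA_sup hLA' hLA'_sup
  refine ⟨fun x hx hx_perp => ?_, ?_⟩
  · have hx_sup : x ∈ A ⊔ A' := by
      rwa [← perp_perp hB hB' (A ⊔ A'), ← perp_inf_perp]
    refine sup_inf_perp_inf_perp_le hA hA' (inf_perp_le_of_sup_inf_eq hA hLA hW)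
      (inf_perp_le_of_sup_inf_eq hA' hLA' ?_) ⟨hx_sup, hx⟩
    rw [inf_comm, hW, inf_comm]
  · have hL_dim := finrank_sup_of_disjoint hLA
    rw [hLA_sup, finrank_perp hB hB'] at hL_dim
    have hA_le := finrank_le A
    rw [finrank_quotient_comap_subtype_of_le (hW ▸ le_sup_right), ← hW,
      finrank_sup_of_disjoint (hLA.mono_right inf_le_left)]
    omega

/-- Let `V` be a `2n`-dimensional symplectic vector space over `k` and let
`A, A'` be `t`-dimensional isotropic subspaces with `(A,A')` good.  Then the bilinear form
induced by `⟨·,·⟩` on `[A,A'] = (A^⊥ ∩ A'^⊥)/(A ∩ A')` is nondegenerate (expressed on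
representatives: any `x ∈ A^⊥ ∩ A'^⊥` pairing to `0` with all of `A^⊥ ∩ A'^⊥` lies in
`A ∩ A'`), so `[A,A']` is a symplectic vector space of dimension `2n - 2t`. -/
theorem stmt6 [FiniteDimensional k V] (n t : ℕ) (hn : 1 ≤ n) (htn : t ≤ n)
    (B : V →ₗ[k] V →ₗ[k] k)
    (hdim : finrank k V = 2 * n)
    (halt : ∀ x : V, B x x = 0)
    (hnd : ∀ x : V, (∀ y : V, B x y = 0) → x = 0)
    (A A' : Submodule k V)
    (hA : A ≤ perp B A) (hA' : A' ≤ perp B A')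
    (hdA : finrank k A = t) (hdA' : finrank k A' = t)
    (hgood : IsGood B A A') :
    (∀ x ∈ perp B A ⊓ perp B A',
      (∀ y ∈ perp B A ⊓ perp B A', B x y = 0) → x ∈ A ⊓ A') ∧
    finrank k (↥(perp B A ⊓ perp B A') ⧸ (A ⊓ A').comap (perp B A ⊓ perp B A').subtype)
      = 2 * n - 2 * t :=
  stmt6_general n t B hdim halt hnd A A' hA hA' hdA hgood
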